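/- The marginal integral of the product of Gaussian likelihoods against the Gaussian prior evaluates in closed form: ∫_{ℝ^n} (∏_{s∈D} N(z_s; H_s x, R_s)) · N(x; μ₀, P₀) dx = [det(P₀) det(M) ∏_{s∈D} (2π)^{m_s} det(R_s)]^{−1/2} · exp{−(1/2)(c − bᵀM⁻¹b)}. -/

import Mathlib

open Matrix MeasureTheory BigOperators

/-- The Gaussian density `N(x; μ, Σ) = (2π)^{−d/2} det(Σ)^{−1/2}
exp(−(1/2)(x−μ)ᵀΣ⁻¹(x−μ))`. -/
noncomputable def gaussPDF {d : ℕ} (μ : Fin d → ℝ) (S : Matrix (Fin d) (Fin d) ℝ)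
    (x : Fin d → ℝ) : ℝ :=
  (2 * Real.pi) ^ (-(d : ℝ) / 2) * S.det ^ (-(1 : ℝ) / 2) *
    Real.exp (-(1 / 2) * ((x - μ) ⬝ᵥ S⁻¹ *ᵥ (x - μ)))

/-!
The integrand is a constant times `exp (-½ Q x)`, where the quadratic `Q` collects the prior
and observation terms into information form `xᵀ M x - 2 bᵀ x + c`. Completing the square turns
`Q x` into `(x - M⁻¹ b)ᵀ M (x - M⁻¹ b) + (c - bᵀ M⁻¹ b)`, and the centred Gaussian integral
`∫ exp (-½ xᵀ M x) = (2π)^{n/2} det(M)^{-1/2}` follows from the standard one by the substitution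
`x ↦ M^{1/2} x`.
-/

open Real

namespace Matrix

lemma PosDef.isSymm {ι : Type*} {A : Matrix ι ι ℝ} (hA : A.PosDef) : A.IsSymm :=
  isHermitian_iff_isSymm.mp hA.isHermitian

variable {ι : Type*} [Fintype ι]

lemma IsSymm.dotProduct_mulVec_sub {S : Matrix ι ι ℝ} (hS : S.IsSymm) (v w : ι → ℝ) :
    (v - w) ⬝ᵥ S *ᵥ (v - w) = v ⬝ᵥ S *ᵥ v - 2 * (S *ᵥ w ⬝ᵥ v) + w ⬝ᵥ S *ᵥ w := by
  have hwv : w ⬝ᵥ S *ᵥ v = S *ᵥ w ⬝ᵥ v := by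
    rw [dotProduct_mulVec, ← mulVec_transpose, hS.eq, dotProduct_comm]
  simp only [mulVec_sub, dotProduct_sub, sub_dotProduct, hwv, dotProduct_comm v (S *ᵥ w)]
  ring

lemma IsSymm.dotProduct_mulVec_sub_mulVec {κ : Type*} [Fintype κ] {S : Matrix κ κ ℝ}
    (hS : S.IsSymm) (H : Matrix κ ι ℝ) (z : κ → ℝ) (x : ι → ℝ) :
    (z - H *ᵥ x) ⬝ᵥ S *ᵥ (z - H *ᵥ x)
      = x ⬝ᵥ (Hᵀ * S * H) *ᵥ x - 2 * (Hᵀ *ᵥ (S *ᵥ z) ⬝ᵥ x) + z ⬝ᵥ S *ᵥ z := by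
  have hquad : H *ᵥ x ⬝ᵥ S *ᵥ (H *ᵥ x) = x ⬝ᵥ (Hᵀ * S * H) *ᵥ x := by
    rw [← mulVec_mulVec, ← mulVec_mulVec, dotProduct_mulVec x, vecMul_transpose]
  have hlin : S *ᵥ z ⬝ᵥ H *ᵥ x = Hᵀ *ᵥ (S *ᵥ z) ⬝ᵥ x := by
    rw [dotProduct_mulVec, ← mulVec_transpose]
  rw [← neg_sub, mulVec_neg, neg_dotProduct, dotProduct_neg, neg_neg,
    hS.dotProduct_mulVec_sub, hquad, hlin]

lemma IsSymm.complete_square [DecidableEq ι] {M : Matrix ι ι ℝ} (hM : M.IsSymm)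
    (hdet : IsUnit M.det) (b : ι → ℝ) (c : ℝ) (x : ι → ℝ) :
    x ⬝ᵥ M *ᵥ x - 2 * (b ⬝ᵥ x) + c
      = (x - M⁻¹ *ᵥ b) ⬝ᵥ M *ᵥ (x - M⁻¹ *ᵥ b) + (c - b ⬝ᵥ M⁻¹ *ᵥ b) := by
  have hb : M *ᵥ (M⁻¹ *ᵥ b) = b := by rw [mulVec_mulVec, mul_nonsing_inv _ hdet, one_mulVec]
  rw [hM.dotProduct_mulVec_sub, hb, dotProduct_comm (M⁻¹ *ᵥ b)]
  ring

variable {D : Type*} [Fintype D] {κ : D → Type*} [∀ s, Fintype (κ s)]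

lemma quadForm_prior_add_sum_obs {A : Matrix ι ι ℝ} (hA : A.IsSymm) (μ : ι → ℝ)
    (H : ∀ s, Matrix (κ s) ι ℝ) {S : ∀ s, Matrix (κ s) (κ s) ℝ} (hS : ∀ s, (S s).IsSymm)
    (z : ∀ s, κ s → ℝ) (x : ι → ℝ) :
    (x - μ) ⬝ᵥ A *ᵥ (x - μ) + ∑ s, (z s - H s *ᵥ x) ⬝ᵥ S s *ᵥ (z s - H s *ᵥ x)
      = x ⬝ᵥ (A + ∑ s, (H s)ᵀ * S s * H s) *ᵥ x
        - 2 * ((A *ᵥ μ + ∑ s, (H s)ᵀ *ᵥ (S s *ᵥ z s)) ⬝ᵥ x)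
        + (μ ⬝ᵥ A *ᵥ μ + ∑ s, z s ⬝ᵥ S s *ᵥ z s) := by
  simp only [hA.dotProduct_mulVec_sub, (hS _).dotProduct_mulVec_sub_mulVec, add_mulVec,
    sum_mulVec, dotProduct_add, add_dotProduct, dotProduct_sum, sum_dotProduct,
    Finset.sum_add_distrib, Finset.sum_sub_distrib, ← Finset.mul_sum]
  ring

lemma PosDef.add_sum_transpose_mul_mul {A : Matrix ι ι ℝ} (hA : A.PosDef)
    (H : ∀ s, Matrix (κ s) ι ℝ) {S : ∀ s, Matrix (κ s) (κ s) ℝ} (hS : ∀ s, (S s).PosSemidef) :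
    (A + ∑ s, (H s)ᵀ * S s * H s).PosDef :=
  hA.add_posSemidef <| posSemidef_sum _ fun s _ => by
    simpa using (hS s).conjTranspose_mul_mul_same (H s)

end Matrix

section GaussianIntegral

variable {ι : Type*} [Fintype ι]

lemma integral_exp_neg_half_dotProduct_self :
    ∫ x : ι → ℝ, exp (-(1 / 2) * (x ⬝ᵥ x)) = √(2 * π) ^ Fintype.card ι := by
  have hline : ∫ t : ℝ, exp (-(1 / 2) * t ^ 2) = √(2 * π) := by
    rw [integral_gaussian, div_div_eq_mul_div, div_one, mul_comm]
  simp_rw [dotProduct, Finset.mul_sum, exp_sum, ← sq]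
  rw [integral_fintype_prod_volume_eq_prod (fun _ t => exp (-(1 / 2) * t ^ 2)), hline,
    Finset.prod_const, Finset.card_univ]

lemma integral_comp_mulVec [DecidableEq ι] {E : Type*} [NormedAddCommGroup E] [NormedSpace ℝ E]
    {A : Matrix ι ι ℝ} (hA : IsUnit A.det) (f : (ι → ℝ) → E) :
    ∫ x, f (A *ᵥ x) = |A.det|⁻¹ • ∫ y, f y := by
  let e := (Matrix.toLinearEquiv' A (A.invertibleOfIsUnitDet hA)).toContinuousLinearEquiv
  have hdet : LinearMap.det (Matrix.toLin' A) ≠ 0 := by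
    rw [LinearMap.det_toLin']; exact hA.ne_zero
  have hmap : Measure.map e volume = ENNReal.ofReal |A.det⁻¹| • volume := by
    rw [← LinearMap.det_toLin', ← Measure.map_linearMap_addHaar_eq_smul_addHaar volume hdet]
    rfl
  have hemb : MeasurableEmbedding e := e.toHomeomorph.measurableEmbedding
  change ∫ x, f (e x) = _
  rw [← hemb.integral_map, hmap, integral_smul_measure, ENNReal.toReal_ofReal (abs_nonneg _),
    abs_inv]

open scoped MatrixOrder in
lemma Matrix.PosDef.integral_exp_neg_half_dotProduct_mulVec [DecidableEq ι]
    {M : Matrix ι ι ℝ} (hM : M.PosDef) :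
    ∫ x : ι → ℝ, exp (-(1 / 2) * (x ⬝ᵥ M *ᵥ x)) = √(2 * π) ^ Fintype.card ι / √M.det := by
  set A := CFC.sqrt M
  have hA : IsUnit A.det := by
    rw [hM.posSemidef.det_sqrt, RCLike.sqrt_real]
    exact (sqrt_pos.mpr hM.det_pos).ne'.isUnit
  have hquad : ∀ x, x ⬝ᵥ M *ᵥ x = A *ᵥ x ⬝ᵥ A *ᵥ x := fun x => by
    have hAt : Aᵀ = A := (isHermitian_iff_isSymm.mp (CFC.sqrt_nonneg M).posSemidef.isHermitian).eq
    rw [← CFC.sqrt_mul_sqrt_self M hM.posSemidef.nonneg, ← mulVec_mulVec, dotProduct_mulVec,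
      ← mulVec_transpose, hAt]
  simp_rw [hquad]
  rw [integral_comp_mulVec hA (fun y => exp (-(1 / 2) * (y ⬝ᵥ y))),
    integral_exp_neg_half_dotProduct_self, hM.posSemidef.det_sqrt, RCLike.sqrt_real,
    abs_of_nonneg (sqrt_nonneg _), smul_eq_mul, inv_mul_eq_div]

lemma Matrix.PosDef.integral_exp_neg_half_quadratic [DecidableEq ι] {M : Matrix ι ι ℝ}
    (hM : M.PosDef) (b : ι → ℝ) (c : ℝ) :
    ∫ x : ι → ℝ, exp (-(1 / 2) * (x ⬝ᵥ M *ᵥ x - 2 * (b ⬝ᵥ x) + c))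
      = √(2 * π) ^ Fintype.card ι / √M.det * exp (-(1 / 2) * (c - b ⬝ᵥ M⁻¹ *ᵥ b)) := by
  simp_rw [hM.isSymm.complete_square hM.det_pos.ne'.isUnit, mul_add, exp_add]
  rw [integral_mul_const, integral_sub_right_eq_self (fun x => exp (-(1 / 2) * (x ⬝ᵥ M *ᵥ x))),
    hM.integral_exp_neg_half_dotProduct_mulVec]

end GaussianIntegral

lemma Real.rpow_neg_one_half {y : ℝ} (hy : 0 ≤ y) : y ^ (-(1 : ℝ) / 2) = (√y)⁻¹ := by
  rw [neg_div, rpow_neg hy, sqrt_eq_rpow]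

lemma Real.sqrt_rpow_natCast {x : ℝ} (hx : 0 ≤ x) (k : ℕ) : √(x ^ (k : ℝ)) = √x ^ k := by
  rw [sqrt_eq_rpow, sqrt_eq_rpow, ← rpow_natCast (x ^ _), ← rpow_mul hx, ← rpow_mul hx, mul_comm]

lemma Real.rpow_neg_one_half_mul_prod {D : Type*} [Fintype D] {p a : ℝ} (hp : 0 ≤ p)
    (ha : 0 ≤ a) (k : D → ℕ) {r : D → ℝ} (hr : ∀ s, 0 ≤ r s) :
    (p * ∏ s, a ^ (k s : ℝ) * r s) ^ (-(1 : ℝ) / 2) = (√p * ∏ s, √a ^ k s * √(r s))⁻¹ := by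
  have hfactor (s : D) : 0 ≤ a ^ (k s : ℝ) * r s := mul_nonneg (rpow_nonneg ha _) (hr s)
  rw [rpow_neg_one_half (mul_nonneg hp (Finset.prod_nonneg fun s _ => hfactor s)), sqrt_mul hp,
    sqrt_prod _ fun s _ => hfactor s]
  simp only [sqrt_mul (rpow_nonneg ha _), sqrt_rpow_natCast ha]

lemma gaussPDF_eq_inv_mul_exp {d : ℕ} (μ : Fin d → ℝ) {S : Matrix (Fin d) (Fin d) ℝ}
    (hS : 0 ≤ S.det) (x : Fin d → ℝ) :
    gaussPDF μ S x
      = (√(2 * π) ^ d * √S.det)⁻¹ * exp (-(1 / 2) * ((x - μ) ⬝ᵥ S⁻¹ *ᵥ (x - μ))) := by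
  have hπ : (2 * π) ^ (-(d : ℝ) / 2) = (√(2 * π) ^ d)⁻¹ := by
    rw [← sqrt_rpow_natCast (by positivity), ← rpow_neg_one_half (by positivity),
      ← rpow_mul (by positivity)]
    ring_nf
  rw [gaussPDF, hπ, rpow_neg_one_half hS, mul_inv]

theorem gaussian_marginal_integral_general
    {n : ℕ} {D : Type*} [Fintype D]
    (m : D → ℕ)
    (μ₀ : Fin n → ℝ)
    (P₀ : Matrix (Fin n) (Fin n) ℝ) (hP₀ : P₀.PosDef)
    (H : ∀ s, Matrix (Fin (m s)) (Fin n) ℝ)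
    (R : ∀ s, Matrix (Fin (m s)) (Fin (m s)) ℝ) (hR : ∀ s, (R s).PosDef)
    (z : ∀ s, Fin (m s) → ℝ)
    (M : Matrix (Fin n) (Fin n) ℝ) (b : Fin n → ℝ) (c : ℝ)
    (hM : M = P₀⁻¹ + ∑ s, (H s)ᵀ * (R s)⁻¹ * H s)
    (hb : b = P₀⁻¹ *ᵥ μ₀ + ∑ s, (H s)ᵀ *ᵥ ((R s)⁻¹ *ᵥ z s))
    (hc : c = μ₀ ⬝ᵥ P₀⁻¹ *ᵥ μ₀ + ∑ s, z s ⬝ᵥ (R s)⁻¹ *ᵥ z s) :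
    ∫ x : Fin n → ℝ, (∏ s, gaussPDF (H s *ᵥ x) (R s) (z s)) * gaussPDF μ₀ P₀ x =
      (P₀.det * M.det * ∏ s, (2 * Real.pi) ^ (m s : ℝ) * (R s).det) ^ (-(1 : ℝ) / 2)
        * Real.exp (-(1 / 2) * (c - b ⬝ᵥ M⁻¹ *ᵥ b)) := by
  have hMpd : M.PosDef := hM ▸ hP₀.inv.add_sum_transpose_mul_mul H fun s => (hR s).inv.posSemidef
  set C := (∏ s, √(2 * π) ^ m s * √(R s).det)⁻¹ * (√(2 * π) ^ n * √P₀.det)⁻¹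
  have hintegrand (x : Fin n → ℝ) :
      (∏ s, gaussPDF (H s *ᵥ x) (R s) (z s)) * gaussPDF μ₀ P₀ x
        = C * exp (-(1 / 2) * (x ⬝ᵥ M *ᵥ x - 2 * (b ⬝ᵥ x) + c)) := by
    rw [hM, hb, hc,
      ← quadForm_prior_add_sum_obs hP₀.inv.isSymm μ₀ H (fun s => (hR s).inv.isSymm) z x]
    simp only [gaussPDF_eq_inv_mul_exp _ (hR _).det_pos.le,
      gaussPDF_eq_inv_mul_exp _ hP₀.det_pos.le, Finset.prod_mul_distrib, Finset.prod_inv_distrib,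
      ← exp_sum, C]
    rw [mul_add, Finset.mul_sum, exp_add]
    ring
  simp_rw [hintegrand]
  rw [integral_const_mul, hMpd.integral_exp_neg_half_quadratic, Fintype.card_fin, ← mul_assoc]
  congr 1
  have hPM : 0 ≤ P₀.det * M.det := (mul_pos hP₀.det_pos hMpd.det_pos).le
  rw [rpow_neg_one_half_mul_prod hPM two_pi_pos.le m fun s => (hR s).det_pos.le,
    sqrt_mul hP₀.det_pos.le]
  simp only [C]
  field_simp

/-- Closed form of the marginal integral:
`∫ (∏ s, N(z_s; H_s x, R_s)) · N(x; μ₀, P₀) dx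
  = [det(P₀) det(M) ∏ s, (2π)^{m_s} det(R_s)]^{−1/2} · exp{−(1/2)(c − bᵀM⁻¹b)}`. -/
theorem gaussian_marginal_integral
    {n : ℕ} (hn : 1 ≤ n) {D : Type*} [Fintype D]
    (m : D → ℕ) (hm : ∀ s, 1 ≤ m s)
    (μ₀ : Fin n → ℝ)
    (P₀ : Matrix (Fin n) (Fin n) ℝ) (hP₀ : P₀.PosDef)
    (H : ∀ s, Matrix (Fin (m s)) (Fin n) ℝ)
    (R : ∀ s, Matrix (Fin (m s)) (Fin (m s)) ℝ) (hR : ∀ s, (R s).PosDef)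
    (z : ∀ s, Fin (m s) → ℝ)
    (M : Matrix (Fin n) (Fin n) ℝ) (b : Fin n → ℝ) (c : ℝ)
    (hM : M = P₀⁻¹ + ∑ s, (H s)ᵀ * (R s)⁻¹ * H s)
    (hb : b = P₀⁻¹ *ᵥ μ₀ + ∑ s, (H s)ᵀ *ᵥ ((R s)⁻¹ *ᵥ z s))
    (hc : c = μ₀ ⬝ᵥ P₀⁻¹ *ᵥ μ₀ + ∑ s, z s ⬝ᵥ (R s)⁻¹ *ᵥ z s) :
    ∫ x : Fin n → ℝ, (∏ s, gaussPDF (H s *ᵥ x) (R s) (z s)) * gaussPDF μ₀ P₀ x =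
      (P₀.det * M.det * ∏ s, (2 * Real.pi) ^ (m s : ℝ) * (R s).det) ^ (-(1 : ℝ) / 2)
        * Real.exp (-(1 / 2) * (c - b ⬝ᵥ M⁻¹ *ᵥ b)) :=
  gaussian_marginal_integral_general m μ₀ P₀ hP₀ H R hR z M b c hM hb hc
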